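/- arXiv:1410.2231 — 6 statements merged into one kernel-verified Lean document; each statement's English description precedes it below -/
import Mathlib

section
/- Let c be a proper 3-coloring of the m×n grid graph, let S ⊆ V be nonempty, and let d ∈ ZMod 3 with d ≠ 0 be such that c(u) − c(v) = d for every edge {u,v} with u ∈ S and v ∉ S. Then the function c' defined by c'(u) = c(u) + d for u ∈ S and c'(u) = c(u) for u ∉ S is a proper 3-coloring of the grid graph, and c' ≠ c. -/
/-- Two vertices of the `m × n` grid graph are adjacent:
`(i,j)` is adjacent to `(i',j')` iff `|i-i'| + |j-j'| = 1`. -/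
def GridAdj {m n : ℕ} (u v : Fin m × Fin n) : Prop :=
  |(u.1.val : ℤ) - (v.1.val : ℤ)| + |(u.2.val : ℤ) - (v.2.val : ℤ)| = 1

/-- A proper `3`-coloring of the `m × n` grid graph. -/
def IsProperColoring {m n : ℕ} (c : Fin m × Fin n → ZMod 3) : Prop :=
  ∀ u v, GridAdj u v → c u ≠ c v

/-- The set of (unordered) edges of the `m × n` grid graph. -/
def GridEdges (m n : ℕ) : Set (Sym2 (Fin m × Fin n)) :=
  {e | ∃ u v, GridAdj u v ∧ e = s(u, v)}

/-- `F` is a forcing set for the proper `3`-coloring `c`: the only proper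
`3`-coloring agreeing with `c` at the base vertex `v₀ = (0,0)` and having the same
color differences as `c` across every edge of `F` is `c` itself. -/
def IsForcing {m n : ℕ} [NeZero m] [NeZero n] (c : Fin m × Fin n → ZMod 3)
    (F : Set (Sym2 (Fin m × Fin n))) : Prop :=
  ∀ c' : Fin m × Fin n → ZMod 3, IsProperColoring c' →
    c' (0, 0) = c (0, 0) →
    (∀ u v : Fin m × Fin n, GridAdj u v → s(u, v) ∈ F → c' v - c' u = c v - c u) →
    c' = c

/-- The checkerboard `3`-coloring of the grid, corresponding to the standard
Miura-ori mountain-valley assignment. -/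
def checkerboard {m n : ℕ} : Fin m × Fin n → ZMod 3 :=
  fun v => if (v.1.val + v.2.val) % 2 = 0 then 0 else 1

/-- **Property 1 of the paper.** If `S` is one side of a uniform curve for the proper
3-coloring `c`, with constant color difference `d ≠ 0` across the cut, then adding
`d` to all colors in `S` yields another proper 3-coloring, distinct from `c`. -/
theorem uniform_cut_recolor {m n : ℕ} [NeZero m] [NeZero n]
    (c : Fin m × Fin n → ZMod 3) (hc : IsProperColoring c)
    (S : Set (Fin m × Fin n)) (hS : S.Nonempty)
    (d : ZMod 3) (hd : d ≠ 0)
    (hcut : ∀ u v : Fin m × Fin n, GridAdj u v → u ∈ S → v ∉ S → c u - c v = d)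
    (c' : Fin m × Fin n → ZMod 3)
    (hin : ∀ u ∈ S, c' u = c u + d)
    (hout : ∀ u ∉ S, c' u = c u) :
    IsProperColoring c' ∧ c' ≠ c := by
  have hsym : ∀ u v : Fin m × Fin n, GridAdj u v → GridAdj v u := by
    intro u v h
    unfold GridAdj at *
    rw [abs_sub_comm, abs_sub_comm ((v.2.val : ℤ))]
    exact h
  constructor
  · intro u v hadj
    by_cases hu : u ∈ S <;> by_cases hv : v ∈ S
    · rw [hin u hu, hin v hv]
      intro h
      exact hc u v hadj (by linear_combination h)
    · rw [hin u hu, hout v hv]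
      have hcd := hcut u v hadj hu hv
      intro h
      have : 2 * d = 0 := by linear_combination h - hcd
      have hd2 : d + d = 0 := by linear_combination this
      -- in ZMod 3, 2 is a unit
      apply hd
      have : (2 : ZMod 3) * d = 0 := by linear_combination this
      have h2 : IsUnit (2 : ZMod 3) := by decide
      exact (h2.mul_right_eq_zero).mp this
    · rw [hin v hv, hout u hu]
      have hcd := hcut v u (hsym u v hadj) hv hu
      intro h
      have : (2 : ZMod 3) * d = 0 := by linear_combination -hcd - h
      have h2 : IsUnit (2 : ZMod 3) := by decide
      exact hd ((h2.mul_right_eq_zero).mp this)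
    · rw [hout u hu, hout v hv]
      exact hc u v hadj
  · obtain ⟨u, hu⟩ := hS
    intro h
    have := hin u hu
    rw [h] at this
    exact hd (by linear_combination -this)
end

section
/- Let c be a proper 3-coloring of the m×n grid graph and let F be a forcing set for c. Then F crosses every uniform cut for c; that is, for every nonempty S ⊆ V with v₀ ∉ S such that c(u) − c(v) takes a constant value over all edges {u,v} with u ∈ S, v ∉ S, there exists an edge {u,v} ∈ F with u ∈ S and v ∉ S. -/
lemma GridAdj.symm' {m n : ℕ} {u v : Fin m × Fin n} (h : GridAdj u v) : GridAdj v u := by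
  unfold GridAdj at *
  rw [abs_sub_comm ((v.1.val:ℤ)) , abs_sub_comm ((v.2.val:ℤ))]
  exact h

/-- **Corollary 2 of the paper.** Every forcing set must cross every uniform cut:
if `F` is a forcing set for `c` and `S` is a nonempty vertex set avoiding the base
vertex across whose boundary the color difference of `c` is constant, then some edge
of `F` has exactly one endpoint in `S`. -/
theorem forcing_crosses_uniform_cuts {m n : ℕ} [NeZero m] [NeZero n]
    (c : Fin m × Fin n → ZMod 3) (hc : IsProperColoring c)
    (F : Set (Sym2 (Fin m × Fin n))) (hFE : F ⊆ GridEdges m n)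
    (hF : IsForcing c F)
    (S : Set (Fin m × Fin n)) (hS : S.Nonempty) (hv₀ : (0, 0) ∉ S)
    (huniform : ∃ d : ZMod 3,
      ∀ u v : Fin m × Fin n, GridAdj u v → u ∈ S → v ∉ S → c u - c v = d) :
    ∃ u v : Fin m × Fin n, GridAdj u v ∧ u ∈ S ∧ v ∉ S ∧ s(u, v) ∈ F := by
  classical
  by_contra h
  push_neg at h
  obtain ⟨d, hd⟩ := huniform
  set t : ZMod 3 := if d = 0 then 1 else d with ht
  have ht0 : t ≠ 0 := by
    by_cases hd0 : d = 0 <;> simp [ht, hd0]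
  have htd : d + t ≠ 0 := by
    by_cases hd0 : d = 0
    · simp [ht, hd0]
    · have : ∀ x : ZMod 3, x ≠ 0 → x + x ≠ 0 := by decide
      simpa [ht, hd0] using this d hd0
  set c' : Fin m × Fin n → ZMod 3 := fun v => if v ∈ S then c v + t else c v with hc'
  have hceq : ∀ v, c' v = if v ∈ S then c v + t else c v := fun v => rfl
  have hprop : IsProperColoring c' := by
    intro u v huv
    rw [hceq u, hceq v]
    by_cases hu : u ∈ S <;> by_cases hv : v ∈ S <;>
      simp only [if_pos, if_neg, hu, hv, if_true, if_false]
    · intro heq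
      exact hc u v huv (add_right_cancel heq)
    · intro heq
      apply htd
      have h1 := hd u v huv hu hv
      rw [← h1]
      linear_combination heq
    · intro heq
      apply htd
      have h1 := hd v u huv.symm' hv hu
      rw [← h1]
      linear_combination -heq
    · exact hc u v huv
  have hbase : c' (0, 0) = c (0, 0) := by
    rw [hceq]; exact if_neg hv₀
  have hdiff : ∀ u v : Fin m × Fin n, GridAdj u v → s(u, v) ∈ F →
      c' v - c' u = c v - c u := by
    intro u v huv hmem
    rw [hceq u, hceq v]
    by_cases hu : u ∈ S <;> by_cases hv : v ∈ S <;>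
      simp only [if_pos, if_neg, hu, hv, if_true, if_false]
    · ring
    · exact absurd hmem (h u v huv hu hv)
    · have : s(v, u) ∈ F := by rwa [Sym2.eq_swap] at hmem
      exact absurd this (h v u huv.symm' hv hu)
  have heq := hF c' hprop hbase hdiff
  obtain ⟨s0, hs0⟩ := hS
  have h2 : c' s0 = c s0 := by rw [heq]
  rw [hceq, if_pos hs0] at h2
  exact ht0 (by linear_combination h2)
end

section
/- Let c and c' be proper 3-colorings of the m×n grid graph with c'(v₀) = c(v₀) and c' ≠ c. Then there exists a uniform cut S for c (i.e., S nonempty, v₀ ∉ S, and c(u) − c(v) constant over all edges {u,v} with u ∈ S, v ∉ S) such that, in addition, every edge {u,v} with u ∈ S and v ∉ S satisfies c'(u) − c(u) ≠ c'(v) − c(v); in particular c'(v) − c'(u) ≠ c(v) − c(u) across every such edge. -/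
namespace SepCutAux

def step (x y : ZMod 3) : ℤ := if y - x = 1 then 1 else -1

lemma step_cases (x y : ZMod 3) : step x y = 1 ∨ step x y = -1 := by
  unfold step; split <;> simp

lemma step_cast {x y : ZMod 3} (h : x ≠ y) : ((step x y : ℤ) : ZMod 3) = y - x := by
  have hd : y - x ≠ 0 := sub_ne_zero.mpr (Ne.symm h)
  unfold step
  revert hd
  generalize y - x = d
  revert d
  decide

lemma gridAdj_symm {m n : ℕ} {u v : Fin m × Fin n} (h : GridAdj u v) : GridAdj v u := by
  unfold GridAdj at *
  rw [abs_sub_comm ((v.1.val : ℤ)), abs_sub_comm ((v.2.val : ℤ))]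
  exact h

def toV (m n : ℕ) [NeZero m] [NeZero n] (i j : ℕ) : Fin m × Fin n :=
  (⟨i % m, Nat.mod_lt _ (NeZero.pos m)⟩, ⟨j % n, Nat.mod_lt _ (NeZero.pos n)⟩)

lemma toV_self {m n : ℕ} [NeZero m] [NeZero n] (p : Fin m × Fin n) :
    toV m n p.1.val p.2.val = p := by
  unfold toV
  apply Prod.ext <;> apply Fin.ext <;>
    simp [Nat.mod_eq_of_lt p.1.isLt, Nat.mod_eq_of_lt p.2.isLt]

lemma toV_zero {m n : ℕ} [NeZero m] [NeZero n] :
    toV m n 0 0 = ((0, 0) : Fin m × Fin n) := by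
  unfold toV
  apply Prod.ext <;> apply Fin.ext <;> simp

lemma adj_right {m n : ℕ} [NeZero m] [NeZero n] {i j : ℕ} (hi : i + 1 < m) (hj : j < n) :
    GridAdj (toV m n i j) (toV m n (i+1) j) := by
  unfold GridAdj toV
  simp only
  rw [Nat.mod_eq_of_lt (by omega : i < m), Nat.mod_eq_of_lt hi, Nat.mod_eq_of_lt hj]
  rw [show ((i:ℤ) - (i+1:ℕ)) = -1 by push_cast; ring]
  simp

lemma adj_up {m n : ℕ} [NeZero m] [NeZero n] {i j : ℕ} (hi : i < m) (hj : j + 1 < n) :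
    GridAdj (toV m n i j) (toV m n i (j+1)) := by
  unfold GridAdj toV
  simp only
  rw [Nat.mod_eq_of_lt hi, Nat.mod_eq_of_lt (by omega : j < n), Nat.mod_eq_of_lt hj]
  rw [show ((j:ℤ) - (j+1:ℕ)) = -1 by push_cast; ring]
  simp

end SepCutAux

namespace SepCutAux

lemma square_int {a b a' b' : ℤ} (ha : a = 1 ∨ a = -1) (hb : b = 1 ∨ b = -1)
    (ha' : a' = 1 ∨ a' = -1) (hb' : b' = 1 ∨ b' = -1)
    (h : ((a + b : ℤ) : ZMod 3) = ((a' + b' : ℤ) : ZMod 3)) : a + b = a' + b' := by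
  have h3 := (ZMod.intCast_eq_intCast_iff' (a+b) (a'+b') 3).mp h
  push_cast at h3
  omega

def HF {m n : ℕ} [NeZero m] [NeZero n] (c : Fin m × Fin n → ZMod 3) (i j : ℕ) : ℤ :=
  (∑ k ∈ Finset.range i, step (c (toV m n k 0)) (c (toV m n (k+1) 0)))
  + ∑ l ∈ Finset.range j, step (c (toV m n i l)) (c (toV m n i (l+1)))

lemma HF_up {m n : ℕ} [NeZero m] [NeZero n] (c : Fin m × Fin n → ZMod 3) (i j : ℕ) :
    HF c i (j+1) = HF c i j + step (c (toV m n i j)) (c (toV m n i (j+1))) := by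
  unfold HF
  rw [Finset.sum_range_succ]
  ring

lemma HF_right {m n : ℕ} [NeZero m] [NeZero n] {c : Fin m × Fin n → ZMod 3}
    (hc : IsProperColoring c) {i j : ℕ} (hi : i + 1 < m) (hj : j < n) :
    HF c (i+1) j = HF c i j + step (c (toV m n i j)) (c (toV m n (i+1) j)) := by
  induction j with
  | zero =>
      unfold HF
      simp [Finset.sum_range_succ]
  | succ j ih =>
      have hj' : j < n := by omega
      have key : step (c (toV m n i j)) (c (toV m n (i+1) j))
          + step (c (toV m n (i+1) j)) (c (toV m n (i+1) (j+1)))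
          = step (c (toV m n i j)) (c (toV m n i (j+1)))
          + step (c (toV m n i (j+1))) (c (toV m n (i+1) (j+1))) := by
        apply square_int (step_cases _ _) (step_cases _ _) (step_cases _ _) (step_cases _ _)
        push_cast
        rw [step_cast (hc _ _ (adj_right hi hj')), step_cast (hc _ _ (adj_up (by omega) hj)),
          step_cast (hc _ _ (adj_up (by omega) hj)), step_cast (hc _ _ (adj_right hi hj))]
        ring
      rw [HF_up, HF_up, ih hj']
      linarith [key]

lemma cast_col {m n : ℕ} [NeZero m] [NeZero n] {c : Fin m × Fin n → ZMod 3}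
    (hc : IsProperColoring c) :
    ∀ i, i < m →
      (((∑ k ∈ Finset.range i, step (c (toV m n k 0)) (c (toV m n (k+1) 0)) : ℤ)) : ZMod 3)
        = c (toV m n i 0) - c (toV m n 0 0)
  | 0, _ => by simp
  | (i+1), hi => by
      rw [Finset.sum_range_succ, Int.cast_add, cast_col hc i (by omega),
        step_cast (hc _ _ (adj_right hi (NeZero.pos n)))]
      ring

lemma cast_row {m n : ℕ} [NeZero m] [NeZero n] {c : Fin m × Fin n → ZMod 3}
    (hc : IsProperColoring c) {i : ℕ} (hi : i < m) :
    ∀ j, j < n →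
      (((∑ l ∈ Finset.range j, step (c (toV m n i l)) (c (toV m n i (l+1))) : ℤ)) : ZMod 3)
        = c (toV m n i j) - c (toV m n i 0)
  | 0, _ => by simp
  | (j+1), hj => by
      rw [Finset.sum_range_succ, Int.cast_add, cast_row hc hi j (by omega),
        step_cast (hc _ _ (adj_up hi hj))]
      ring

lemma cast_HF {m n : ℕ} [NeZero m] [NeZero n] {c : Fin m × Fin n → ZMod 3}
    (hc : IsProperColoring c) {i j : ℕ} (hi : i < m) (hj : j < n) :
    ((HF c i j : ℤ) : ZMod 3) = c (toV m n i j) - c (toV m n 0 0) := by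
  unfold HF
  rw [Int.cast_add, cast_col hc i hi, cast_row hc hi j hj]
  ring

lemma HF_adj {m n : ℕ} [NeZero m] [NeZero n] {c : Fin m × Fin n → ZMod 3}
    (hc : IsProperColoring c) {u v : Fin m × Fin n} (huv : GridAdj u v) :
    HF c v.1.val v.2.val = HF c u.1.val u.2.val + step (c u) (c v) := by
  have hcases : (u.1.val = v.1.val ∧ (v.2.val = u.2.val + 1 ∨ u.2.val = v.2.val + 1))
      ∨ (u.2.val = v.2.val ∧ (v.1.val = u.1.val + 1 ∨ u.1.val = v.1.val + 1)) := by
    have h := huv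
    unfold GridAdj at h
    rcases abs_cases ((u.1.val:ℤ) - v.1.val) with ⟨h1,_⟩|⟨h1,_⟩ <;>
      rcases abs_cases ((u.2.val:ℤ) - v.2.val) with ⟨h2,_⟩|⟨h2,_⟩ <;> omega
  have hne : c u ≠ c v := hc u v huv
  have hstep : step (c u) (c v) = - step (c v) (c u) := by
    have e1 := step_cast hne
    have e2 := step_cast (Ne.symm hne)
    rcases step_cases (c u) (c v) with h1|h1 <;> rcases step_cases (c v) (c u) with h2|h2 <;>
      rw [h1] at e1 ⊢ <;> rw [h2] at e2 ⊢ <;> push_cast at e1 e2 <;> try norm_num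
    · have h0 : (2 : ZMod 3) = 0 := by linear_combination e1 + e2
      exact absurd h0 (by decide)
    · have h0 : (2 : ZMod 3) = 0 := by linear_combination - e1 - e2
      exact absurd h0 (by decide)
  rcases hcases with ⟨h1, h2|h2⟩ | ⟨h1, h2|h2⟩
  · -- up: v = (u.1, u.2+1)
    have e2 : toV m n u.1.val (u.2.val+1) = v := by rw [h1, ← h2]; exact toV_self v
    rw [← h1, h2, HF_up, toV_self u, e2]
  · -- down: u = (v.1, v.2+1)
    have e2 : toV m n v.1.val (v.2.val+1) = u := by rw [← h1, ← h2]; exact toV_self u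
    have := HF_up c v.1.val v.2.val
    rw [toV_self v, e2] at this
    rw [h1, h2, this, hstep]
    ring
  · -- right
    have e2 : toV m n (u.1.val+1) u.2.val = v := by rw [h1, ← h2]; exact toV_self v
    have hi : u.1.val + 1 < m := by have := v.1.isLt; omega
    have := HF_right hc hi u.2.isLt
    rw [toV_self u, e2] at this
    rw [← h1, h2]
    exact this
  · -- left
    have e2 : toV m n (v.1.val+1) v.2.val = u := by rw [← h1, ← h2]; exact toV_self u
    have hi : v.1.val + 1 < m := by have := u.1.isLt; omega
    have := HF_right hc hi v.2.isLt
    rw [toV_self v, e2] at this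
    rw [h1, h2, this, hstep]
    ring

end SepCutAux

namespace SepCutAux

def gfun {m n : ℕ} [NeZero m] [NeZero n] (c c' : Fin m × Fin n → ZMod 3)
    (p : Fin m × Fin n) : ℤ :=
  HF c' p.1.val p.2.val - HF c p.1.val p.2.val

lemma gfun_zero {m n : ℕ} [NeZero m] [NeZero n] (c c' : Fin m × Fin n → ZMod 3) :
    gfun c c' (0, 0) = 0 := by
  simp [gfun, HF]

lemma gfun_adj {m n : ℕ} [NeZero m] [NeZero n] {c c' : Fin m × Fin n → ZMod 3}
    (hc : IsProperColoring c) (hc' : IsProperColoring c')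
    {u v : Fin m × Fin n} (huv : GridAdj u v) :
    gfun c c' v - gfun c c' u = step (c' u) (c' v) - step (c u) (c v) := by
  unfold gfun
  rw [HF_adj hc' huv, HF_adj hc huv]
  ring

lemma gfun_cast {m n : ℕ} [NeZero m] [NeZero n] {c c' : Fin m × Fin n → ZMod 3}
    (hc : IsProperColoring c) (hc' : IsProperColoring c') (p : Fin m × Fin n) :
    ((gfun c c' p : ℤ) : ZMod 3) = (c' p - c' (0,0)) - (c p - c (0,0)) := by
  unfold gfun
  rw [Int.cast_sub, cast_HF hc p.1.isLt p.2.isLt, cast_HF hc' p.1.isLt p.2.isLt,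
    toV_self, toV_zero]

/-- If `g v - g u = 2` across an edge, then the color differences are forced. -/
lemma cross_eqs {m n : ℕ} [NeZero m] [NeZero n] {c c' : Fin m × Fin n → ZMod 3}
    (hc : IsProperColoring c) (hc' : IsProperColoring c')
    {u v : Fin m × Fin n} (huv : GridAdj u v)
    (h2 : gfun c c' v - gfun c c' u = 2) :
    c' v - c' u = 1 ∧ c v - c u = -1 := by
  have he := gfun_adj hc hc' huv
  have hA : step (c' u) (c' v) = 1 := by
    rcases step_cases (c' u) (c' v) with h|h
    · exact h
    · rcases step_cases (c u) (c v) with h'|h' <;> omega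
  have hB : step (c u) (c v) = -1 := by
    rcases step_cases (c u) (c v) with h'|h'
    · omega
    · exact h'
  constructor
  · have := step_cast (hc' u v huv)
    rw [hA] at this
    push_cast at this
    exact this.symm
  · have := step_cast (hc u v huv)
    rw [hB] at this
    push_cast at this
    exact this.symm

end SepCutAux

open SepCutAux

/-- **Lemmas 1 and 2 of the paper combined.** Any two distinct proper 3-colorings
agreeing at the base vertex are separated by a uniform cut for `c`: there is a
nonempty set `S` avoiding the base vertex, with constant `c`-difference across its
boundary, such that the type `c' - c` changes across every boundary edge; in
particular the two colorings have different differences across every boundary edge. -/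
theorem separating_uniform_cut {m n : ℕ} [NeZero m] [NeZero n]
    (c c' : Fin m × Fin n → ZMod 3)
    (hc : IsProperColoring c) (hc' : IsProperColoring c')
    (hbase : c' (0, 0) = c (0, 0)) (hne : c' ≠ c) :
    ∃ S : Set (Fin m × Fin n), S.Nonempty ∧ (0, 0) ∉ S ∧
      (∃ d : ZMod 3,
        ∀ u v : Fin m × Fin n, GridAdj u v → u ∈ S → v ∉ S → c u - c v = d) ∧
      (∀ u v : Fin m × Fin n, GridAdj u v → u ∈ S → v ∉ S →
        c' u - c u ≠ c' v - c v) ∧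
      (∀ u v : Fin m × Fin n, GridAdj u v → u ∈ S → v ∉ S →
        c' v - c' u ≠ c v - c u) := by
  set g : Fin m × Fin n → ℤ := gfun c c' with hg
  -- a point where the colorings differ
  obtain ⟨p₀, hp₀⟩ := Function.ne_iff.mp hne
  have hgp₀ : g p₀ ≠ 0 := by
    intro h0
    apply hp₀
    have := gfun_cast hc hc' p₀
    rw [← hg, h0, hbase] at this
    push_cast at this
    have h2 : (0 : ZMod 3) = c' p₀ - c p₀ := by linear_combination this
    exact (sub_eq_zero.mp h2.symm)
  have hg0 : g (0, 0) = 0 := gfun_zero c c'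
  by_cases hpos : ∃ p, 0 < g p
  · -- use the maximum
    obtain ⟨P, -, hP⟩ := Finset.exists_max_image Finset.univ g ⟨(0,0), Finset.mem_univ _⟩
    have hPpos : 0 < g P := by
      obtain ⟨p, hp⟩ := hpos
      exact lt_of_lt_of_le hp (hP p (Finset.mem_univ p))
    refine ⟨{p | g p = g P}, ⟨P, rfl⟩, ?_, ?_, ?_, ?_⟩
    · simp only [Set.mem_setOf_eq, hg0]
      omega
    · refine ⟨-1, fun u v huv hu hv => ?_⟩
      simp only [Set.mem_setOf_eq] at hu hv
      have hle := hP v (Finset.mem_univ v)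
      have h2 : g u - g v = 2 := by
        have he := gfun_adj hc hc' (gridAdj_symm huv)
        rw [← hg] at he
        have s1 := step_cases (c' v) (c' u)
        have s2 := step_cases (c v) (c u)
        omega
      exact (cross_eqs hc hc' (gridAdj_symm huv) (by rw [← hg]; exact h2)).2
    · intro u v huv hu hv h
      simp only [Set.mem_setOf_eq] at hu hv
      have hle := hP v (Finset.mem_univ v)
      have h2 : g u - g v = 2 := by
        have he := gfun_adj hc hc' (gridAdj_symm huv)
        rw [← hg] at he
        have s1 := step_cases (c' v) (c' u)
        have s2 := step_cases (c v) (c u)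
        omega
      obtain ⟨hA, hB⟩ := cross_eqs hc hc' (gridAdj_symm huv) (by rw [← hg]; exact h2)
      have hcon : c' u - c' v = c u - c v := by linear_combination h
      rw [hA, hB] at hcon
      exact absurd hcon (by decide)
    · intro u v huv hu hv h
      simp only [Set.mem_setOf_eq] at hu hv
      have hle := hP v (Finset.mem_univ v)
      have h2 : g u - g v = 2 := by
        have he := gfun_adj hc hc' (gridAdj_symm huv)
        rw [← hg] at he
        have s1 := step_cases (c' v) (c' u)
        have s2 := step_cases (c v) (c u)
        omega
      obtain ⟨hA, hB⟩ := cross_eqs hc hc' (gridAdj_symm huv) (by rw [← hg]; exact h2)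
      have hcon : c' u - c' v = c u - c v := by linear_combination - h
      rw [hA, hB] at hcon
      exact absurd hcon (by decide)
  · -- use the minimum
    push_neg at hpos
    obtain ⟨Q, -, hQ⟩ := Finset.exists_min_image Finset.univ g ⟨(0,0), Finset.mem_univ _⟩
    have hQneg : g Q < 0 := by
      have h1 := hQ p₀ (Finset.mem_univ p₀)
      have h2 := hpos p₀
      omega
    refine ⟨{p | g p = g Q}, ⟨Q, rfl⟩, ?_, ?_, ?_, ?_⟩
    · simp only [Set.mem_setOf_eq, hg0]
      omega
    · refine ⟨1, fun u v huv hu hv => ?_⟩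
      simp only [Set.mem_setOf_eq] at hu hv
      have hle := hQ v (Finset.mem_univ v)
      have h2 : g v - g u = 2 := by
        have he := gfun_adj hc hc' huv
        rw [← hg] at he
        have s1 := step_cases (c' u) (c' v)
        have s2 := step_cases (c u) (c v)
        omega
      have hB := (cross_eqs hc hc' huv (by rw [← hg]; exact h2)).2
      linear_combination - hB
    · intro u v huv hu hv h
      simp only [Set.mem_setOf_eq] at hu hv
      have hle := hQ v (Finset.mem_univ v)
      have h2 : g v - g u = 2 := by
        have he := gfun_adj hc hc' huv
        rw [← hg] at he
        have s1 := step_cases (c' u) (c' v)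
        have s2 := step_cases (c u) (c v)
        omega
      obtain ⟨hA, hB⟩ := cross_eqs hc hc' huv (by rw [← hg]; exact h2)
      have hcon : c' v - c' u = c v - c u := by linear_combination - h
      rw [hA, hB] at hcon
      exact absurd hcon (by decide)
    · intro u v huv hu hv h
      simp only [Set.mem_setOf_eq] at hu hv
      have hle := hQ v (Finset.mem_univ v)
      have h2 : g v - g u = 2 := by
        have he := gfun_adj hc hc' huv
        rw [← hg] at he
        have s1 := step_cases (c' u) (c' v)
        have s2 := step_cases (c u) (c v)
        omega
      obtain ⟨hA, hB⟩ := cross_eqs hc hc' huv (by rw [← hg]; exact h2)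
      rw [hA, hB] at h
      exact absurd h (by decide)
end

section
/- Let m, n be positive integers with mn ≥ 2, and let c be the checkerboard coloring of the m×n grid graph. If F is a forcing set for c, then every vertex of the grid graph is an endpoint of some edge of F. -/
lemma checkerboard_ne_two {m n : ℕ} (x : Fin m × Fin n) : checkerboard x ≠ 2 := by
  unfold checkerboard; split <;> decide

lemma gridAdj_irrefl {m n : ℕ} (u : Fin m × Fin n) : ¬ GridAdj u u := by
  unfold GridAdj; simp

lemma gridAdj_parity {m n : ℕ} {u v : Fin m × Fin n} (h : GridAdj u v) :
    (u.1.val + u.2.val) % 2 ≠ (v.1.val + v.2.val) % 2 := by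
  unfold GridAdj at h
  rcases abs_cases ((u.1.val : ℤ) - v.1.val) with ⟨h1, _⟩ | ⟨h1, _⟩ <;>
  rcases abs_cases ((u.2.val : ℤ) - v.2.val) with ⟨h2, _⟩ | ⟨h2, _⟩ <;>
  rw [h1, h2] at h <;> omega

lemma checkerboard_proper {m n : ℕ} :
    IsProperColoring (checkerboard (m := m) (n := n)) := by
  intro u v h
  have hp := gridAdj_parity h
  unfold checkerboard
  rcases Nat.mod_two_eq_zero_or_one (u.1.val + u.2.val) with h1 | h1 <;>
  rcases Nat.mod_two_eq_zero_or_one (v.1.val + v.2.val) with h2 | h2 <;>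
  simp [h1, h2] at hp ⊢

/-- **Key step of the paper's lower bound for the standard Miura-ori.** Any forcing
set for the checkerboard coloring of the `m × n` grid (with `mn ≥ 2`) must touch
every vertex of the grid. -/
theorem checkerboard_forcing_covers_vertices {m n : ℕ} [NeZero m] [NeZero n]
    (hmn : 2 ≤ m * n)
    (F : Set (Sym2 (Fin m × Fin n))) (hFE : F ⊆ GridEdges m n)
    (hF : IsForcing checkerboard F) :
    ∀ v : Fin m × Fin n, ∃ e ∈ F, v ∈ e := by
  intro v
  by_contra hcon
  push_neg at hcon
  -- hcon : ∀ e ∈ F, v ∉ e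
  have hnotend : ∀ u w : Fin m × Fin n, s(u, w) ∈ F → u ≠ v ∧ w ≠ v := by
    intro u w hmem
    have := hcon _ hmem
    simp only [Sym2.mem_iff] at this
    push_neg at this
    exact ⟨fun h => this.1 h.symm, fun h => this.2 h.symm⟩
  by_cases hv : v = (0, 0)
  · -- uncovered base vertex: shift everything else by 1
    subst hv
    set c' : Fin m × Fin n → ZMod 3 :=
      fun x => if x = (0, 0) then 0 else checkerboard x + 1 with hc'
    have hv0 : checkerboard ((0, 0) : Fin m × Fin n) = 0 := by
      unfold checkerboard; simp
    have hproper : IsProperColoring c' := by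
      intro a b hab
      have hne := checkerboard_proper a b hab
      by_cases ha : a = (0, 0) <;> by_cases hb : b = (0, 0)
      · exact absurd (ha ▸ hb ▸ hab) (gridAdj_irrefl _)
      · simp only [hc', if_pos ha, if_neg hb]
        exact fun h => checkerboard_ne_two b (by linear_combination -h - (by decide : (3:ZMod 3) = 0))
      · simp only [hc', if_neg ha, if_pos hb]
        exact fun h => checkerboard_ne_two a (by linear_combination h - (by decide : (3:ZMod 3) = 0))
      · simp only [hc', if_neg ha, if_neg hb]
        exact fun h => hne (by linear_combination h)
    have hbase : c' ((0, 0) : Fin m × Fin n) = checkerboard ((0, 0) : Fin m × Fin n) := by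
      show (if ((0, 0) : Fin m × Fin n) = (0, 0) then (0 : ZMod 3)
        else checkerboard (0, 0) + 1) = checkerboard (0, 0)
      rw [if_pos rfl, hv0]
    have hdiff : ∀ u w : Fin m × Fin n, GridAdj u w → s(u, w) ∈ F →
        c' w - c' u = checkerboard w - checkerboard u := by
      intro u w _ hmem
      obtain ⟨hu, hw⟩ := hnotend u w hmem
      simp only [hc', if_neg hu, if_neg hw]
      ring
    have heq := hF c' hproper hbase hdiff
    -- find a vertex ≠ (0,0)
    have hx : ∃ x : Fin m × Fin n, x ≠ (0, 0) := by
      rcases Nat.lt_or_ge m 2 with hm | hm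
      · have hm1 : m = 1 := by have := Nat.pos_of_ne_zero (NeZero.ne m); omega
        have hn2 : 2 ≤ n := by
          by_contra h
          have := Nat.pos_of_ne_zero (NeZero.ne n)
          interval_cases n <;> omega
        refine ⟨(0, ⟨1, by omega⟩), ?_⟩
        intro h
        have := congrArg (fun p => p.2.val) h
        simp at this
      · refine ⟨(⟨1, by omega⟩, 0), ?_⟩
        intro h
        have := congrArg (fun p => p.1.val) h
        simp at this
    obtain ⟨x, hxne⟩ := hx
    have := congrFun heq x
    simp only [hc', if_neg hxne] at this
    exact one_ne_zero (by linear_combination this)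
  · -- uncovered non-base vertex: recolor it to 2
    set c' : Fin m × Fin n → ZMod 3 :=
      fun x => if x = v then 2 else checkerboard x with hc'
    have hproper : IsProperColoring c' := by
      intro a b hab
      have hne := checkerboard_proper a b hab
      by_cases ha : a = v <;> by_cases hb : b = v
      · exact absurd (ha ▸ hb ▸ hab) (gridAdj_irrefl _)
      · simp only [hc', if_pos ha, if_neg hb]
        exact fun h => checkerboard_ne_two b h.symm
      · simp only [hc', if_neg ha, if_pos hb]
        exact checkerboard_ne_two a
      · simpa only [hc', if_neg ha, if_neg hb] using hne
    have hbase : c' ((0, 0) : Fin m × Fin n) = checkerboard ((0, 0) : Fin m × Fin n) := by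
      show (if ((0, 0) : Fin m × Fin n) = v then (2 : ZMod 3)
        else checkerboard (0, 0)) = checkerboard (0, 0)
      rw [if_neg (fun h => hv h.symm)]
    have hdiff : ∀ u w : Fin m × Fin n, GridAdj u w → s(u, w) ∈ F →
        c' w - c' u = checkerboard w - checkerboard u := by
      intro u w _ hmem
      obtain ⟨hu, hw⟩ := hnotend u w hmem
      simp only [hc', if_neg hu, if_neg hw]
    have heq := hF c' hproper hbase hdiff
    have := congrFun heq v
    simp only [hc', if_pos rfl] at this
    exact checkerboard_ne_two v this.symm
end

section
/- Let m, n be positive integers and let c be any proper 3-coloring of the m×n grid graph. Then every forcing set for c has cardinality at least m + n − 2. -/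
set_option linter.unusedSectionVars false
set_option linter.unusedVariables false

namespace ForcingLB

variable {m n : ℕ} [NeZero m] [NeZero n]

lemma gridAdj_symm {u v : Fin m × Fin n} (h : GridAdj u v) : GridAdj v u := by
  unfold GridAdj at *
  rw [abs_sub_comm ((v.1.val : ℤ)) _, abs_sub_comm ((v.2.val : ℤ)) _]
  exact h

lemma gridAdj_iff (u v : Fin m × Fin n) : GridAdj u v ↔
    (u.1.val = v.1.val ∧ (u.2.val + 1 = v.2.val ∨ v.2.val + 1 = u.2.val)) ∨
    (u.2.val = v.2.val ∧ (u.1.val + 1 = v.1.val ∨ v.1.val + 1 = u.1.val)) := by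
  unfold GridAdj
  rcases abs_cases ((u.1.val : ℤ) - v.1.val) with ⟨h1, _⟩ | ⟨h1, _⟩ <;>
  rcases abs_cases ((u.2.val : ℤ) - v.2.val) with ⟨h2, _⟩ | ⟨h2, _⟩ <;>
  rw [h1, h2] <;> omega

section Defs

variable (c : Fin m × Fin n → ZMod 3)

def C (i j : ℕ) : ZMod 3 :=
  c (⟨i % m, Nat.mod_lt _ (NeZero.pos m)⟩, ⟨j % n, Nat.mod_lt _ (NeZero.pos n)⟩)

lemma C_def (i j : ℕ) (hi : i < m) (hj : j < n) : C c i j = c (⟨i, hi⟩, ⟨j, hj⟩) := by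
  simp [C, Nat.mod_eq_of_lt hi, Nat.mod_eq_of_lt hj]

lemma c_eq_C (w : Fin m × Fin n) : c w = C c w.1.val w.2.val := by
  rw [C_def c _ _ w.1.isLt w.2.isLt]

def vdf (i j : ℕ) : ZMod 3 := C c (i+1) j - C c i j

def hdf (i j : ℕ) : ZMod 3 := C c i (j+1) - C c i j

lemma cellId (i j : ℕ) : vdf c i j + hdf c (i+1) j = hdf c i j + vdf c i (j+1) := by
  simp only [vdf, hdf]; ring

end Defs

section Proper

variable {c : Fin m × Fin n → ZMod 3} (hc : IsProperColoring c)

include hc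

lemma vdf_ne {i j : ℕ} (hi : i + 1 < m) (hj : j < n) : vdf c i j ≠ 0 := by
  have hadj : GridAdj (⟨i, Nat.lt_of_succ_lt hi⟩, ⟨j, hj⟩) ((⟨i+1, hi⟩ : Fin m), ⟨j, hj⟩) := by
    rw [gridAdj_iff]; right; exact ⟨rfl, Or.inl rfl⟩
  have := hc _ _ hadj
  rw [vdf, C_def c _ _ hi hj, C_def c _ _ (Nat.lt_of_succ_lt hi) hj]
  exact sub_ne_zero_of_ne (Ne.symm this)

lemma hdf_ne {i j : ℕ} (hi : i < m) (hj : j + 1 < n) : hdf c i j ≠ 0 := by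
  have hadj : GridAdj (⟨i, hi⟩, ⟨j, Nat.lt_of_succ_lt hj⟩) ((⟨i, hi⟩ : Fin m), ⟨j+1, hj⟩) := by
    rw [gridAdj_iff]; left; exact ⟨rfl, Or.inl rfl⟩
  have := hc _ _ hadj
  rw [hdf, C_def c _ _ hi hj, C_def c _ _ hi (Nat.lt_of_succ_lt hj)]
  exact sub_ne_zero_of_ne (Ne.symm this)

end Proper

-- ZMod 3 facts
lemma Zturn : ∀ d a b x y : ZMod 3, a ≠ 0 → b ≠ 0 → x ≠ 0 → y ≠ 0 → d ≠ 0 →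
    a + y = x + b → a = d → b ≠ d → x = d := by decide

lemma Zstop1 : ∀ d a b x y : ZMod 3, a ≠ 0 → b ≠ 0 → x ≠ 0 → y ≠ 0 → d ≠ 0 →
    a + y = x + b → y = d → x ≠ d → b = d := by decide

lemma Zstop2 : ∀ d a b x y : ZMod 3, a ≠ 0 → b ≠ 0 → x ≠ 0 → y ≠ 0 → d ≠ 0 →
    a + y = x + b → y = d → x ≠ d → a ≠ d := by decide

lemma Zcancel : ∀ a b x y : ZMod 3, a + y = x + b → x = y → a = b := by
  intro a b x y h hxy
  subst hxy
  have h2 : a + x = b + x := by rw [h]; ring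
  exact add_right_cancel h2

lemma Z2d : ∀ d : ZMod 3, d ≠ 0 → d + d ≠ 0 := by decide


section Curves

variable (c : Fin m × Fin n → ZMod 3)

def descend (j : ℕ) : ℕ → ℕ
  | 0 => 0
  | t+1 => if hdf c t j = hdf c (t+1) j then descend j t else t+1

def step (d : ZMod 3) (j h : ℕ) : ℕ :=
  if h = 0 then 0 else if m ≤ h then m
  else if vdf c (h-1) (j+1) = d then h else descend c j (h-1)

lemma descend_le (j t : ℕ) : descend c j t ≤ t := by
  induction t with
  | zero => simp [descend]
  | succ t ih =>
    rw [descend]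
    split
    · omega
    · omega

lemma descend_uniform (j : ℕ) : ∀ t t' : ℕ, descend c j t ≤ t' → t' ≤ t →
    hdf c t' j = hdf c t j := by
  intro t
  induction t with
  | zero =>
    intro t' _ h2
    have : t' = 0 := by omega
    subst this; rfl
  | succ t ih =>
    intro t' h1 h2
    rw [descend] at h1
    split at h1
    · rcases Nat.eq_or_lt_of_le h2 with rfl | hlt
      · rfl
      · rename_i heq
        rw [← heq]
        exact ih t' h1 (by omega)
    · have : t' = t + 1 := by omega
      subst this; rfl

lemma descend_stop (j : ℕ) : ∀ t : ℕ, 1 ≤ descend c j t →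
    hdf c (descend c j t - 1) j ≠ hdf c t j := by
  intro t
  induction t with
  | zero => simp [descend]
  | succ t ih =>
    rw [descend]
    split
    · rename_i heq
      intro h1
      rw [← heq]
      exact ih h1
    · rename_i hne
      intro _
      simpa using hne

lemma step_le {d : ZMod 3} {j h : ℕ} (hh : h < m) : step c d j h ≤ h := by
  unfold step
  split
  · omega
  · split
    · omega
    · split
      · omega
      · have := descend_le c j (h-1); omega

lemma step_straight {d : ZMod 3} {j h : ℕ} (hh : h < m) (h1 : 1 ≤ h)
    (hs : step c d j h = h) : vdf c (h-1) (j+1) = d := by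
  unfold step at hs
  rw [if_neg (by omega), if_neg (by omega)] at hs
  by_contra hne
  rw [if_neg hne] at hs
  have := descend_le c j (h-1)
  omega

lemma step_desc {d : ZMod 3} {j h : ℕ} (hh : h < m) (hs : step c d j h < h) :
    vdf c (h-1) (j+1) ≠ d ∧ step c d j h = descend c j (h-1) ∧ 1 ≤ h := by
  unfold step at hs ⊢
  by_cases h0 : h = 0
  · subst h0; simp at hs
  rw [if_neg h0, if_neg (by omega)] at hs ⊢
  by_cases hv : vdf c (h-1) (j+1) = d
  · rw [if_pos hv] at hs; omega
  · rw [if_neg hv]; exact ⟨hv, rfl, by omega⟩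

end Curves

section CurveFacts

variable {c : Fin m × Fin n → ZMod 3} (hc : IsProperColoring c)

include hc

lemma descendMain {d : ZMod 3} {j T : ℕ} (hjn : j + 1 < n) (hT : T < m) (hd0 : d ≠ 0)
    (hdT : hdf c T j = d) :
    (1 ≤ descend c j T → vdf c (descend c j T - 1) (j+1) = d) ∧
    (∀ t, descend c j T ≤ t → t ≤ T → hdf c t j = d) := by
  have huni : ∀ t, descend c j T ≤ t → t ≤ T → hdf c t j = d := by
    intro t h1 h2
    rw [descend_uniform c j T t h1 h2]; exact hdT
  refine ⟨?_, huni⟩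
  intro h1
  have ht₀T : descend c j T ≤ T := descend_le c j T
  have hstop : hdf c (descend c j T - 1) j ≠ hdf c T j := descend_stop c j T h1
  obtain ⟨i, hi⟩ : ∃ i, descend c j T = i + 1 := ⟨descend c j T - 1, by omega⟩
  rw [hi] at ht₀T hstop ⊢
  simp only [Nat.add_sub_cancel]
  rw [hdT] at hstop
  have hy : hdf c (i+1) j = d := huni (i+1) (by omega) ht₀T
  have hcell := cellId c i j
  have him : i + 1 < m := by omega
  exact Zstop1 d (vdf c i j) (vdf c i (j+1)) (hdf c i j) (hdf c (i+1) j)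
    (vdf_ne hc him (by omega)) (vdf_ne hc him hjn) (hdf_ne hc (by omega) hjn)
    (hdf_ne hc him hjn) hd0 hcell hy hstop

lemma stepMain {d : ZMod 3} {j h : ℕ} (hjn : j + 1 < n) (hh : h < m) (hd0 : d ≠ 0)
    (hinv : 1 ≤ h → vdf c (h-1) j = d) :
    (1 ≤ step c d j h → vdf c (step c d j h - 1) (j+1) = d) ∧
    (∀ t, step c d j h ≤ t → t < h → hdf c t j = d) := by
  by_cases h0 : h = 0
  · subst h0
    have hz : step c d j 0 = 0 := by simp [step]
    rw [hz]
    exact ⟨fun hx => absurd hx (by omega), fun t hta htb => absurd htb (Nat.not_lt_zero t)⟩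
  have h1 : 1 ≤ h := by omega
  have hinv' := hinv h1
  unfold step
  rw [if_neg h0, if_neg (by omega)]
  by_cases hv : vdf c (h-1) (j+1) = d
  · rw [if_pos hv]
    exact ⟨fun _ => hv, fun t hta htb => by omega⟩
  · rw [if_neg hv]
    obtain ⟨i, hi⟩ : ∃ i, h = i + 1 := ⟨h - 1, by omega⟩
    subst hi
    simp only [Nat.add_sub_cancel] at hinv' hv ⊢
    -- turn: hdf c i j = d
    have hcell := cellId c i j
    have hx : hdf c i j = d :=
      Zturn d (vdf c i j) (vdf c i (j+1)) (hdf c i j) (hdf c (i+1) j)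
        (vdf_ne hc hh (by omega)) (vdf_ne hc hh hjn) (hdf_ne hc (by omega) hjn)
        (hdf_ne hc hh hjn) hd0 hcell hinv' hv
    have hdm := descendMain hc hjn (by omega : i < m) hd0 hx
    exact ⟨hdm.1, fun t hta htb => hdm.2 t hta (by omega)⟩

end CurveFacts


section Families

variable (c : Fin m × Fin n → ZMod 3)

def Hl (k : ℕ) : ℕ → ℕ
  | 0 => k
  | j+1 => step c (vdf c (k-1) 0) j (Hl k j)

def Ht (l : ℕ) : ℕ → ℕ
  | 0 => m
  | j+1 => if j+1 < l then m else if j+1 = l then descend c j (m-1)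
           else step c (hdf c (m-1) (l-1)) j (Ht l j)

lemma Hl_succ (k j : ℕ) : Hl c k (j+1) = step c (vdf c (k-1) 0) j (Hl c k j) := rfl

lemma Hl_zero (k : ℕ) : Hl c k 0 = k := rfl

lemma Ht_zero (l : ℕ) : Ht c l 0 = m := rfl

structure Valid (d : ZMod 3) (H : ℕ → ℕ) : Prop where
  dne : d ≠ 0
  mono : ∀ j, j+1 < n → H (j+1) ≤ H j
  hm : ∀ j, j < n → H j ≤ m
  inv : ∀ j, j < n → 1 ≤ H j → H j < m → vdf c (H j - 1) j = d
  uni : ∀ j t, j+1 < n → H (j+1) ≤ t → t < H j → hdf c t j = d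
  straightP : ∀ j, j+1 < n → H (j+1) = H j → 1 ≤ H j → H j < m → vdf c (H j - 1) (j+1) = d
  descP : ∀ j, j+1 < n → H (j+1) < H j → H j < m →
      vdf c (H j - 1) (j+1) ≠ d ∧ H (j+1) = descend c j (H j - 1)
  descmP : ∀ j, j+1 < n → H j = m → H (j+1) < m →
      H (j+1) = descend c j (m-1) ∧ hdf c (m-1) j = d
  preP : ∀ j, H j = m → ∀ j', j' ≤ j → H j' = m

lemma Hl_lt {k : ℕ} (hk : k < m) : ∀ j, Hl c k j < m := by
  intro j
  induction j with
  | zero => exact hk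
  | succ j ih =>
    rw [Hl_succ]
    exact lt_of_le_of_lt (step_le c ih) ih

lemma Ht_pre {l : ℕ} : ∀ j, j < l → Ht c l j = m := by
  intro j
  induction j with
  | zero => intro _; rfl
  | succ j ih =>
    intro hj
    rw [Ht]
    rw [if_pos hj]

lemma Ht_lt {l : ℕ} (hl1 : 1 ≤ l) : ∀ j, l ≤ j → Ht c l j < m := by
  intro j
  induction j with
  | zero => intro h; omega
  | succ j ih =>
    intro hj
    rw [Ht]
    rcases Nat.lt_or_ge l (j+1) with h | h
    · rw [if_neg (by omega), if_neg (by omega)]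
      have hlt := ih (by omega)
      exact lt_of_le_of_lt (step_le c hlt) hlt
    · have : j + 1 = l := by omega
      rw [if_neg (by omega), if_pos this]
      have := descend_le c j (m-1)
      have := NeZero.pos m
      omega

end Families

section FamilyValid

variable {c : Fin m × Fin n → ZMod 3} (hc : IsProperColoring c)

include hc

lemma Hl_inv {k : ℕ} (hk1 : 1 ≤ k) (hk : k < m) :
    ∀ j, j < n → 1 ≤ Hl c k j → vdf c (Hl c k j - 1) j = vdf c (k-1) 0 := by
  have hd0 : vdf c (k-1) 0 ≠ 0 := vdf_ne hc (by omega) (NeZero.pos n)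
  intro j
  induction j with
  | zero => intro _ _; rfl
  | succ j ih =>
    intro hjn h1
    rw [Hl_succ] at h1 ⊢
    exact (stepMain hc hjn (Hl_lt c hk j) hd0 (ih (by omega))).1 h1

lemma validL {k : ℕ} (hk1 : 1 ≤ k) (hk : k < m) :
    Valid c (vdf c (k-1) 0) (Hl c k) := by
  have hd0 : vdf c (k-1) 0 ≠ 0 := vdf_ne hc (by omega) (NeZero.pos n)
  refine ⟨hd0, ?_, ?_, fun j hj h1 _ => Hl_inv hc hk1 hk j hj h1, ?_, ?_, ?_, ?_, ?_⟩
  · intro j _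
    rw [Hl_succ]
    exact step_le c (Hl_lt c hk j)
  · intro j _
    exact le_of_lt (Hl_lt c hk j)
  · intro j t hjn h1 h2
    rw [Hl_succ] at h1
    exact (stepMain hc hjn (Hl_lt c hk j) hd0
      (Hl_inv hc hk1 hk j (by omega))).2 t h1 h2
  · intro j _ hEq h1 hlt
    exact step_straight c (Hl_lt c hk j) h1 (by rw [← Hl_succ, hEq])
  · intro j _ hlt hm'
    rw [Hl_succ] at hlt ⊢
    obtain ⟨a, b, _⟩ := step_desc c (Hl_lt c hk j) hlt
    exact ⟨a, b⟩
  · intro j _ hm' _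
    exact absurd hm' (by have := Hl_lt c hk j; omega)
  · intro j hm'
    exact absurd hm' (by have := Hl_lt c hk j; omega)

lemma Ht_inv {l : ℕ} (hl1 : 1 ≤ l) (hln : l < n) :
    ∀ j, l ≤ j → j < n → 1 ≤ Ht c l j → vdf c (Ht c l j - 1) j = hdf c (m-1) (l-1) := by
  have hd0 : hdf c (m-1) (l-1) ≠ 0 :=
    hdf_ne hc (by have := NeZero.pos m; omega) (by omega)
  intro j
  induction j with
  | zero => intro h; omega
  | succ j ih =>
    intro hlj hjn h1
    rcases Nat.lt_or_ge l (j+1) with h | h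
    · rw [Ht, if_neg (by omega), if_neg (by omega)] at h1 ⊢
      exact (stepMain hc hjn (Ht_lt c hl1 j (by omega)) hd0 (ih (by omega) (by omega))).1 h1
    · have hjl : j + 1 = l := by omega
      rw [Ht, if_neg (by omega), if_pos hjl] at h1 ⊢
      have hT : hdf c (m-1) j = hdf c (m-1) (l-1) := by
        have : j = l - 1 := by omega
        rw [this]
      exact (descendMain hc hjn (by have := NeZero.pos m; omega) hd0 hT).1 h1

lemma validT {l : ℕ} (hl1 : 1 ≤ l) (hln : l < n) :
    Valid c (hdf c (m-1) (l-1)) (Ht c l) := by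
  have hm1 := NeZero.pos m
  have hd0 : hdf c (m-1) (l-1) ≠ 0 := hdf_ne hc (by omega) (by omega)
  refine ⟨hd0, ?_, ?_, ?_, ?_, ?_, ?_, ?_, ?_⟩
  · -- mono
    intro j hjn
    rcases Nat.lt_or_ge (j+1) l with h | h
    · rw [Ht_pre c (j+1) h, Ht_pre c j (by omega)]
    rcases Nat.eq_or_lt_of_le h with h' | h'
    · rw [Ht, if_neg (by omega), if_pos h'.symm, Ht_pre c j (by omega)]
      have := descend_le c j (m-1); omega
    · rw [Ht, if_neg (by omega), if_neg (by omega)]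
      exact step_le c (Ht_lt c hl1 j (by omega))
  · -- hm
    intro j _
    rcases Nat.lt_or_ge j l with h | h
    · rw [Ht_pre c j h]
    · exact le_of_lt (Ht_lt c hl1 j h)
  · -- inv
    intro j hj h1 hlt
    have hlj : l ≤ j := by
      by_contra hcon
      rw [Ht_pre c j (by omega)] at hlt
      omega
    exact Ht_inv hc hl1 hln j hlj hj h1
  · -- uni
    intro j t hjn h1 h2
    rcases Nat.lt_or_ge (j+1) l with h | h
    · rw [Ht_pre c j (by omega)] at h2
      rw [Ht_pre c (j+1) h] at h1
      omega
    rcases Nat.eq_or_lt_of_le h with h' | h'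
    · subst h'
      simp only [Nat.add_sub_cancel] at hd0
      rw [Ht, if_neg (by omega), if_pos rfl] at h1
      rw [Ht_pre c j (by omega)] at h2
      simp only [Nat.add_sub_cancel]
      exact (descendMain hc (by omega) (by omega) hd0 rfl).2 t h1 (by omega)
    · rw [Ht, if_neg (by omega), if_neg (by omega)] at h1
      exact (stepMain hc hjn (Ht_lt c hl1 j (by omega)) hd0
        (Ht_inv hc hl1 hln j (by omega) (by omega))).2 t h1 h2
  · -- straight
    intro j hjn hEq h1 hlt
    rcases Nat.lt_or_ge (j+1) l with h | h
    · rw [Ht_pre c (j+1) h] at hEq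
      omega
    rcases Nat.eq_or_lt_of_le h with h' | h'
    · rw [Ht_pre c j (by omega)] at hlt
      omega
    · rw [Ht, if_neg (by omega), if_neg (by omega)] at hEq
      exact step_straight c (Ht_lt c hl1 j (by omega)) h1 hEq
  · -- desc
    intro j hjn hlt hm'
    rcases Nat.lt_or_ge (j+1) l with h | h
    · rw [Ht_pre c (j+1) h, Ht_pre c j (by omega)] at hlt
      omega
    rcases Nat.eq_or_lt_of_le h with h' | h'
    · rw [Ht_pre c j (by omega)] at hm'
      omega
    · rw [Ht, if_neg (by omega), if_neg (by omega)] at hlt ⊢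
      obtain ⟨a, b, _⟩ := step_desc c (Ht_lt c hl1 j (by omega)) hlt
      exact ⟨a, b⟩
  · -- descm
    intro j hjn hm' hlt
    have hjl : j < l := by
      by_contra hcon
      have := Ht_lt c hl1 j (by omega)
      omega
    have hjl2 : ¬ (j + 1 < l) := by
      intro hcon
      rw [Ht_pre c (j+1) hcon] at hlt
      omega
    have hjl3 : j + 1 = l := by omega
    constructor
    · rw [Ht, if_neg (by omega), if_pos hjl3]
    · rw [show j = l - 1 by omega]
  · -- pre
    intro j hm' j' hj'
    have hjl : j < l := by
      by_contra hcon
      have := Ht_lt c hl1 j (by omega)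
      omega
    exact Ht_pre c j' (by omega)

end FamilyValid


section Disjoint

variable {c : Fin m × Fin n → ZMod 3} (hc : IsProperColoring c)

include hc

lemma auxA {d : ZMod 3} {H H' : ℕ → ℕ} (V : Valid c d H) (V' : Valid c d H')
    {j t : ℕ} (hjn : j + 1 < n)
    (h1 : H (j+1) ≤ t) (h2 : t < H j) (h3 : H' (j+1) ≤ t) (h4 : t < H' j)
    (hab : H j < H' j) : False := by
  have hbm : H' j ≤ m := V'.hm j (by omega)
  have ham : H j < m := by omega
  have h1a : 1 ≤ H j := by omega
  obtain ⟨i, hi⟩ : ∃ i, H j = i + 1 := ⟨H j - 1, by omega⟩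
  have hdesc := (V.descP j hjn (by omega) ham).1
  rw [hi] at hdesc
  simp only [Nat.add_sub_cancel] at hdesc
  have hu1 : hdf c i j = d := V'.uni j i hjn (by omega) (by omega)
  have hu2 : hdf c (i+1) j = d := V'.uni j (i+1) hjn (by omega) (by omega)
  have hinv := V.inv j (by omega) h1a ham
  rw [hi] at hinv
  simp only [Nat.add_sub_cancel] at hinv
  have hcl := Zcancel (vdf c i j) (vdf c i (j+1)) (hdf c i j) (hdf c (i+1) j)
    (cellId c i j) (by rw [hu1, hu2])
  exact hdesc (by rw [← hcl]; exact hinv)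

lemma auxB {d : ZMod 3} {H H' : ℕ → ℕ} (V : Valid c d H) (V' : Valid c d H')
    {j : ℕ} (hjn : j + 1 < n) (hstr : H (j+1) = H j) (heq : H (j+1) = H' (j+1))
    (h1 : 1 ≤ H (j+1)) (hm2 : H (j+1) < m) (hlt : H (j+1) < H' j) : False := by
  have hbm : H' j ≤ m := V'.hm j (by omega)
  obtain ⟨T, hT1, hT2, hT3⟩ : ∃ T, H' (j+1) = descend c j T ∧ hdf c T j = d ∧ T < m := by
    rcases Nat.eq_or_lt_of_le hbm with hb | hb
    · obtain ⟨e1, e2⟩ := V'.descmP j hjn hb (by omega)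
      exact ⟨m-1, e1, e2, by have := NeZero.pos m; omega⟩
    · obtain ⟨_, e⟩ := V'.descP j hjn (by omega) hb
      refine ⟨H' j - 1, e, ?_, by omega⟩
      exact V'.uni j (H' j - 1) hjn (by omega) (by omega)
  rw [← heq] at hT1
  have hle : H (j+1) ≤ T := hT1 ▸ descend_le c j T
  have hstop : hdf c (H (j+1) - 1) j ≠ d := by
    have := descend_stop c j T (hT1 ▸ h1)
    rw [← hT1, hT2] at this
    exact this
  have hy : hdf c (H (j+1)) j = d := by
    have := descend_uniform c j T (H (j+1)) (le_of_eq hT1.symm) hle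
    rw [hT2] at this
    exact this
  obtain ⟨i, hi⟩ : ∃ i, H (j+1) = i + 1 := ⟨H (j+1) - 1, by omega⟩
  rw [hi] at hstop hy hm2
  simp only [Nat.add_sub_cancel] at hstop
  have hane : vdf c i j ≠ d :=
    Zstop2 d (vdf c i j) (vdf c i (j+1)) (hdf c i j) (hdf c (i+1) j)
      (vdf_ne hc hm2 (by omega)) (vdf_ne hc hm2 hjn) (hdf_ne hc (by omega) hjn)
      (hdf_ne hc hm2 hjn) V.dne (cellId c i j) hy hstop
  have hinv := V.inv j (by omega) (by omega) (by omega)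
  have hi' : H j = i + 1 := by omega
  rw [hi'] at hinv
  simp only [Nat.add_sub_cancel] at hinv
  exact hane hinv

lemma BE {d : ZMod 3} {H H' : ℕ → ℕ} (V : Valid c d H) (V' : Valid c d H') :
    ∀ j, j < n → H j = H' j → 1 ≤ H j → H j < m → ∀ j', j' ≤ j → H j' = H' j' := by
  intro j
  induction j with
  | zero =>
    intro _ he _ _ j' hj'
    have : j' = 0 := by omega
    subst this; exact he
  | succ j ih =>
    intro hjn he h1 hm2 j' hj'
    have hjeq : H j = H' j := by
      rcases lt_trichotomy (H j) (H' j) with hlt | heq | hgt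
      · exfalso
        have hmono : H (j+1) ≤ H j := V.mono j hjn
        rcases Nat.eq_or_lt_of_le hmono with hs | hs
        · exact auxB hc V V' hjn hs he h1 hm2 (by omega)
        · exact auxA hc V V' hjn (by omega : H (j+1) ≤ H j - 1) (by omega)
            (by omega : H' (j+1) ≤ H j - 1) (by omega) hlt
      · exact heq
      · exfalso
        have hmono : H' (j+1) ≤ H' j := V'.mono j hjn
        rcases Nat.eq_or_lt_of_le hmono with hs | hs
        · exact auxB hc V' V hjn hs he.symm (by omega) (by omega) (by omega)
        · exact auxA hc V' V hjn (by omega : H' (j+1) ≤ H' j - 1) (by omega)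
            (by omega : H (j+1) ≤ H' j - 1) (by omega) hgt
    rcases Nat.eq_or_lt_of_le hj' with rfl | hj''
    · exact he
    · by_cases hjm : H j < m
      · exact ih (by omega) hjeq (by have := V.mono j hjn; omega) hjm j' (by omega)
      · have hHm : H j = m := by have := V.hm j (by omega); omega
        have hHm' : H' j = m := hjeq ▸ hHm
        rw [V.preP j hHm j' (by omega), V'.preP j hHm' j' (by omega)]

end Disjoint


section Ports

variable (c : Fin m × Fin n → ZMod 3)

def PortOK (m n : ℕ) : ℕ ⊕ ℕ → Prop := fun p =>
  match p with
  | .inl k => 1 ≤ k ∧ k < m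
  | .inr l => 1 ≤ l ∧ l < n

def HP : ℕ ⊕ ℕ → ℕ → ℕ := Sum.elim (Hl c) (Ht c)

def dP : ℕ ⊕ ℕ → ZMod 3 := Sum.elim (fun k => vdf c (k-1) 0) (fun l => hdf c (m-1) (l-1))

end Ports

section PortFacts

variable {c : Fin m × Fin n → ZMod 3} (hc : IsProperColoring c)

include hc in
lemma validP {p : ℕ ⊕ ℕ} (hp : PortOK m n p) : Valid c (dP c p) (HP c p) := by
  match p with
  | .inl k => exact validL hc hp.1 hp.2
  | .inr l => exact validT hc hp.1 hp.2

lemma port_eq {p q : ℕ ⊕ ℕ} (hp : PortOK m n p) (hq : PortOK m n q) {j : ℕ} (hj : j < n)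
    (hEq : ∀ j', j' ≤ j → HP c p j' = HP c q j') (hlt : HP c p j < m) : p = q := by
  match p, q with
  | .inl k, .inl k' =>
    have := hEq 0 (by omega)
    simp only [HP, Sum.elim_inl, Hl_zero] at this
    rw [this]
  | .inl k, .inr l' =>
    have := hEq 0 (by omega)
    simp only [HP, Sum.elim_inl, Sum.elim_inr, Hl_zero, Ht_zero] at this
    exact absurd this (by have := hp.2; omega)
  | .inr l, .inl k' =>
    have := hEq 0 (by omega)
    simp only [HP, Sum.elim_inl, Sum.elim_inr, Hl_zero, Ht_zero] at this
    exact absurd this.symm (by have := hq.2; omega)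
  | .inr l, .inr l' =>
    simp only [HP, Sum.elim_inr] at hEq hlt
    rcases lt_trichotomy l l' with h | h | h
    · -- l < l' ; column l : Ht l l < m, Ht l' l = m
      exfalso
      have hlj : l ≤ j := by
        by_contra hcon
        rw [Ht_pre c j (by omega)] at hlt
        omega
      have h1 := hEq l hlj
      rw [Ht_pre c l h] at h1
      have := Ht_lt c hp.1 l (le_refl l)
      omega
    · rw [h]
    · -- l' < l
      exfalso
      have hlj : l' ≤ j := by
        by_contra hcon
        have h1 := hEq j (le_refl j)
        rw [Ht_pre (l := l') c j (by omega)] at h1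
        omega
      have h1 := hEq l' hlj
      rw [Ht_pre c l' h] at h1
      have := Ht_lt c hq.1 l' (le_refl l')
      omega

lemma entry_detect {p : ℕ ⊕ ℕ} (hp : PortOK m n p) {j : ℕ}
    (h1 : HP c p j = m) (h2 : HP c p (j+1) < m) : p = Sum.inr (j+1) := by
  match p with
  | .inl k =>
    simp only [HP, Sum.elim_inl] at h1
    exact absurd h1 (by have := Hl_lt c hp.2 j; omega)
  | .inr l =>
    simp only [HP, Sum.elim_inr] at h1 h2
    have hjl : j < l := by
      by_contra hcon
      have := Ht_lt c hp.1 j (by omega)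
      omega
    have hjl2 : ¬ (j + 1 < l) := by
      intro hcon
      rw [Ht_pre c (j+1) hcon] at h2
      omega
    have : l = j + 1 := by omega
    rw [this]

include hc

lemma no_shared {p q : ℕ ⊕ ℕ} (hp : PortOK m n p) (hq : PortOK m n q)
    (u v : Fin m × Fin n) (hadj : GridAdj u v)
    (hPu : u.1.val < HP c p u.2.val) (hPv : ¬ v.1.val < HP c p v.2.val)
    (hQ : (u.1.val < HP c q u.2.val ∧ ¬ v.1.val < HP c q v.2.val) ∨
          (v.1.val < HP c q v.2.val ∧ ¬ u.1.val < HP c q u.2.val)) : p = q := by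
  have Vp := validP hc hp
  have Vq := validP hc hq
  rcases (gridAdj_iff u v).mp hadj with ⟨hcol, hrow⟩ | ⟨hrow, hcol⟩
  · -- same row (u.1 = v.1), horizontal edge
    rcases hrow with hR | hL
    · -- u.2 + 1 = v.2 : rightward
      set i := u.1.val with hi
      set j := u.2.val with hj
      have hvn : j + 1 < n := by rw [hR]; exact v.2.isLt
      have hv1 : v.1.val = i := hcol.symm
      rw [hv1, ← hR] at hPv
      -- hPu : i < HP p j ; hPv : ¬ i < HP p (j+1)
      have hQu : i < HP c q j := by
        rcases hQ with ⟨ha, _⟩ | ⟨ha, _⟩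
        · exact ha
        · exfalso
          rw [hv1, ← hR] at ha
          have := Vq.mono j hvn
          omega
      have hQv : ¬ i < HP c q (j+1) := by
        rcases hQ with ⟨_, hb⟩ | ⟨ha, _⟩
        · rw [hv1, ← hR] at hb
          exact hb
        · exfalso
          rw [hv1, ← hR] at ha
          have := Vq.mono j hvn
          omega
      -- d values equal
      have hdp : hdf c i j = dP c p := Vp.uni j i hvn (by omega) hPu
      have hdq : hdf c i j = dP c q := Vq.uni j i hvn (by omega) hQu
      have hdd : dP c q = dP c p := by rw [← hdp, ← hdq]
      have Vq' : Valid c (dP c p) (HP c q) := hdd ▸ Vq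
      rcases lt_trichotomy (HP c p j) (HP c q j) with hlt | heq | hgt
      · exact absurd (auxA hc Vp Vq' (t := i) hvn (by omega) (by omega) (by omega) (by omega) hlt) id
      · by_cases hmm : HP c p j < m
        · exact port_eq hp hq (by omega)
            (BE hc Vp Vq' j (by omega) heq (by omega) hmm) hmm
        · have h1 : HP c p j = m := by have := Vp.hm j (by omega); omega
          have h2 : HP c q j = m := by rw [← heq]; exact h1
          have e1 := entry_detect hp h1 (by omega : HP c p (j+1) < m)
          have e2 := entry_detect hq h2 (by omega : HP c q (j+1) < m)
          rw [e1, e2]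
      · exact absurd (auxA hc Vq' Vp (t := i) hvn (by omega) (by omega) (by omega) (by omega) hgt) id
    · -- v.2 + 1 = u.2 : leftward, impossible
      exfalso
      have hun : v.2.val + 1 < n := by rw [hL]; exact u.2.isLt
      have hv1 : v.1.val = u.1.val := hcol.symm
      rw [hv1] at hPv
      have := Vp.mono v.2.val hun
      rw [hL] at this
      omega
  · -- same column, vertical edge
    rcases hcol with hU | hD
    · -- u.1 + 1 = v.1 : upward
      set i := u.1.val with hi
      set j := u.2.val with hj
      have hjn : j < n := u.2.isLt
      have him : i + 1 < m := by rw [hU]; exact v.1.isLt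
      have hv2 : v.2.val = j := hrow.symm
      rw [hv2, ← hU] at hPv
      have hHp : HP c p j = i + 1 := by omega
      have hQ' : HP c q j = i + 1 := by
        rcases hQ with ⟨ha, hb⟩ | ⟨ha, hb⟩
        · rw [hv2, ← hU] at hb; omega
        · rw [hv2, ← hU] at ha; omega
      have hdp := Vp.inv j hjn (by omega) (by omega)
      have hdq := Vq.inv j hjn (by omega) (by omega)
      rw [hHp] at hdp
      rw [hQ'] at hdq
      simp only [Nat.add_sub_cancel] at hdp hdq
      have hdd : dP c q = dP c p := by rw [← hdp, ← hdq]
      have Vq' : Valid c (dP c p) (HP c q) := hdd ▸ Vq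
      exact port_eq hp hq hjn
        (BE hc Vp Vq' j hjn (by omega) (by omega) (by omega)) (by omega)
    · -- v.1 + 1 = u.1 : downward, impossible
      exfalso
      have hv2 : v.2.val = u.2.val := hrow.symm
      rw [hv2] at hPv
      omega

end PortFacts


-- more ZMod 3 facts for the flip
lemma Zd1 : ∀ x y d : ZMod 3, d ≠ 0 → y - x = d → x ≠ y + d := by decide

section Flip

variable {c : Fin m × Fin n → ZMod 3} (hc : IsProperColoring c)

include hc

lemma exists_cross {F : Finset (Sym2 (Fin m × Fin n))}
    (hF : IsForcing c (↑F : Set (Sym2 (Fin m × Fin n))))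
    {d : ZMod 3} {H : ℕ → ℕ} (V : Valid c d H) (h0 : 1 ≤ H 0)
    {j₀ : ℕ} (hj₀ : j₀ < n) (hj₀m : H j₀ < m) :
    ∃ e ∈ F, ∃ u v : Fin m × Fin n, GridAdj u v ∧ e = s(u, v) ∧
      u.1.val < H u.2.val ∧ ¬ v.1.val < H v.2.val := by
  by_contra hcon
  push_neg at hcon
  set c' : Fin m × Fin n → ZMod 3 :=
    fun w => if w.1.val < H w.2.val then c w else c w + d with hc'def
  have hval : ∀ w : Fin m × Fin n,
      c' w = if w.1.val < H w.2.val then c w else c w + d := fun w => rfl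
  have hsame : ∀ u v : Fin m × Fin n, GridAdj u v → s(u,v) ∈ F →
      ((u.1.val < H u.2.val) ↔ (v.1.val < H v.2.val)) := by
    intro u v hadj hmem
    constructor
    · exact hcon _ hmem u v hadj rfl
    · exact hcon _ hmem v u (gridAdj_symm hadj) Sym2.eq_swap
  have keyH : ∀ u v : Fin m × Fin n, u.1.val = v.1.val → u.2.val + 1 = v.2.val →
      c' u ≠ c' v := by
    intro u v h1 h2
    have hi : u.1.val < m := u.1.isLt
    have hjn : u.2.val + 1 < n := by rw [h2]; exact v.2.isLt
    rw [hval u, hval v, c_eq_C c u, c_eq_C c v, ← h1, ← h2]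
    by_cases hA : u.1.val < H u.2.val <;> by_cases hB : u.1.val < H (u.2.val + 1)
    · rw [if_pos hA, if_pos hB]
      intro heq
      exact hdf_ne hc hi hjn (by rw [hdf, ← heq, sub_self])
    · rw [if_pos hA, if_neg hB]
      have hd : hdf c u.1.val u.2.val = d := V.uni u.2.val u.1.val hjn (by omega) hA
      exact Zd1 _ _ d V.dne hd
    · exfalso
      have := V.mono u.2.val hjn
      omega
    · rw [if_neg hA, if_neg hB]
      intro heq
      have heq2 : C c u.1.val u.2.val = C c u.1.val (u.2.val+1) := by
        have := add_right_cancel heq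
        exact this
      exact hdf_ne hc hi hjn (by rw [hdf, ← heq2, sub_self])
  have keyV : ∀ u v : Fin m × Fin n, u.2.val = v.2.val → u.1.val + 1 = v.1.val →
      c' u ≠ c' v := by
    intro u v h1 h2
    have hjn : u.2.val < n := u.2.isLt
    have him : u.1.val + 1 < m := by rw [h2]; exact v.1.isLt
    rw [hval u, hval v, c_eq_C c u, c_eq_C c v, ← h1, ← h2]
    by_cases hA : u.1.val < H u.2.val <;> by_cases hB : u.1.val + 1 < H u.2.val
    · rw [if_pos hA, if_pos hB]
      intro heq
      exact vdf_ne hc him hjn (by rw [vdf, ← heq, sub_self])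
    · rw [if_pos hA, if_neg hB]
      have hHj : H u.2.val = u.1.val + 1 := by omega
      have hd := V.inv u.2.val hjn (by omega) (by omega)
      rw [hHj] at hd
      simp only [Nat.add_sub_cancel] at hd
      exact Zd1 _ _ d V.dne hd
    · exfalso; omega
    · rw [if_neg hA, if_neg hB]
      intro heq
      have heq2 : C c u.1.val u.2.val = C c (u.1.val+1) u.2.val := add_right_cancel heq
      exact vdf_ne hc him hjn (by rw [vdf, ← heq2, sub_self])
  have hprop : IsProperColoring c' := by
    intro u v hadj
    rcases (gridAdj_iff u v).mp hadj with ⟨h1, h2 | h2⟩ | ⟨h1, h2 | h2⟩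
    · exact keyH u v h1 h2
    · exact (keyH v u h1.symm h2).symm
    · exact keyV u v h1 h2
    · exact (keyV v u h1.symm h2).symm
  have hbase : c' (0, 0) = c (0, 0) := by
    rw [hval]
    rw [if_pos]
    show (0 : Fin m).val < H (0 : Fin n).val
    simp only [Fin.val_zero]
    omega
  have hdiffs : ∀ u v : Fin m × Fin n, GridAdj u v →
      s(u, v) ∈ (↑F : Set (Sym2 (Fin m × Fin n))) → c' v - c' u = c v - c u := by
    intro u v hadj hmem
    have hiff := hsame u v hadj (by exact_mod_cast hmem)
    rw [hval u, hval v]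
    by_cases hA : u.1.val < H u.2.val
    · rw [if_pos hA, if_pos (hiff.mp hA)]
    · rw [if_neg hA, if_neg (fun h => hA (hiff.mpr h))]
      ring
  have heqc := hF c' hprop hbase hdiffs
  have hmlt : m - 1 < m := by have := NeZero.pos m; omega
  have hw := congrFun heqc (⟨m-1, hmlt⟩, ⟨j₀, hj₀⟩)
  rw [hval] at hw
  rw [if_neg (show ¬ ((⟨m-1, hmlt⟩ : Fin m).val < H ((⟨j₀, hj₀⟩ : Fin n)).val) by
    show ¬ (m - 1 < H j₀); omega)] at hw
  exact V.dne (add_eq_left.mp hw)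

lemma exists_cross_port {F : Finset (Sym2 (Fin m × Fin n))}
    (hF : IsForcing c (↑F : Set (Sym2 (Fin m × Fin n))))
    {p : ℕ ⊕ ℕ} (hp : PortOK m n p) :
    ∃ e ∈ F, ∃ u v : Fin m × Fin n, GridAdj u v ∧ e = s(u, v) ∧
      u.1.val < HP c p u.2.val ∧ ¬ v.1.val < HP c p v.2.val := by
  have V := validP hc hp
  match p with
  | .inl k =>
    refine exists_cross hc hF V ?_ (NeZero.pos n) ?_
    · show 1 ≤ Hl c k 0
      rw [Hl_zero]
      exact hp.1
    · show Hl c k 0 < m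
      rw [Hl_zero]
      exact hp.2
  | .inr l =>
    refine exists_cross hc hF V ?_ (j₀ := l) hp.2 ?_
    · show 1 ≤ Ht c l 0
      rw [Ht_zero]
      exact NeZero.pos m
    · show Ht c l l < m
      exact Ht_lt c hp.1 l (le_refl l)

end Flip

end ForcingLB

/-- **Universal lower bound of the paper.** For every proper 3-coloring of the
`m × n` grid graph, every forcing set has cardinality at least `m + n - 2`. -/
theorem forcing_set_universal_lower_bound {m n : ℕ} [NeZero m] [NeZero n]
    (c : Fin m × Fin n → ZMod 3) (hc : IsProperColoring c)
    (F : Finset (Sym2 (Fin m × Fin n))) (hFE : ↑F ⊆ GridEdges m n)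
    (hF : IsForcing c (↑F : Set (Sym2 (Fin m × Fin n)))) :
    m + n - 2 ≤ F.card := by
  classical
  have hm1 := NeZero.pos m
  have hn1 := NeZero.pos n
  by_contra hlt
  push_neg at hlt
  set P : Finset (ℕ ⊕ ℕ) := Finset.disjSum (Finset.Icc 1 (m-1)) (Finset.Icc 1 (n-1)) with hP
  have hPcard : P.card = m + n - 2 := by
    rw [hP, Finset.card_disjSum, Nat.card_Icc, Nat.card_Icc]
    omega
  have hPok : ∀ p ∈ P, ForcingLB.PortOK m n p := by
    intro p hp
    rw [hP, Finset.mem_disjSum] at hp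
    rcases hp with ⟨k, hk, rfl⟩ | ⟨l, hl, rfl⟩
    · rw [Finset.mem_Icc] at hk
      exact ⟨hk.1, by omega⟩
    · rw [Finset.mem_Icc] at hl
      exact ⟨hl.1, by omega⟩
  have hex : ∀ p ∈ P, ∃ e ∈ F, ∃ u v : Fin m × Fin n, GridAdj u v ∧ e = s(u, v) ∧
      u.1.val < ForcingLB.HP c p u.2.val ∧ ¬ v.1.val < ForcingLB.HP c p v.2.val :=
    fun p hp => ForcingLB.exists_cross_port hc hF (hPok p hp)
  choose f hfF uu vv hadj hedge hA hB using hex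
  have hcard : F.card < P.card := by omega
  set g : ℕ ⊕ ℕ → Sym2 (Fin m × Fin n) :=
    fun p => if hp : p ∈ P then f p hp else s(((0 : Fin m), (0 : Fin n)), ((0 : Fin m), (0 : Fin n))) with hg
  have hmaps : ∀ p ∈ P, g p ∈ F := by
    intro p hp
    have : g p = f p hp := by rw [hg]; exact dif_pos hp
    rw [this]
    exact hfF p hp
  obtain ⟨p, hp, q, hq, hne, heq⟩ := Finset.exists_ne_map_eq_of_card_lt_of_maps_to hcard hmaps
  apply hne
  have heq' : f p hp = f q hq := by
    have e1 : g p = f p hp := by rw [hg]; exact dif_pos hp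
    have e2 : g q = f q hq := by rw [hg]; exact dif_pos hq
    rw [← e1, ← e2, heq]
  have hEdge : s(uu p hp, vv p hp) = s(uu q hq, vv q hq) := by
    rw [← hedge p hp, ← hedge q hq, heq']
  rcases Sym2.eq_iff.mp hEdge with ⟨h1, h2⟩ | ⟨h1, h2⟩
  · refine ForcingLB.no_shared hc (hPok p hp) (hPok q hq) (uu p hp) (vv p hp) (hadj p hp)
      (hA p hp) (hB p hp) (Or.inl ⟨?_, ?_⟩)
    · rw [h1]; exact hA q hq
    · rw [h2]; exact hB q hq
  · refine ForcingLB.no_shared hc (hPok p hp) (hPok q hq) (uu p hp) (vv p hp) (hadj p hp)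
      (hA p hp) (hB p hp) (Or.inr ⟨?_, ?_⟩)
    · rw [h2]; exact hA q hq
    · rw [h1]; exact hB q hq
end

section
/- Let m, n be positive integers. Orient every horizontal edge of the m×n grid graph from (i,j) to (i,j+1) and every vertical edge from (i,j) to (i+1,j), and let D be the set of these oriented edges. Then the map c ↦ δ_c, where δ_c(e) = c(head of e) − c(tail of e) ∈ ZMod 3, is a bijection from the set of proper 3-colorings c of the grid graph with c(v₀) = 0 onto the set of functions δ : D → ZMod 3 such that (i) δ(e) ≠ 0 for every e ∈ D, and (ii) for every i < m−1 and j < n−1, δ on the unit square with corners (i,j), (i,j+1), (i+1,j), (i+1,j+1) satisfies δ(top) + δ(right) = δ(left) + δ(bottom), where top is the edge (i,j)→(i,j+1), bottom is (i+1,j)→(i+1,j+1), left is (i,j)→(i+1,j), and right is (i,j+1)→(i+1,j+1). -/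
/-- `Fwd u v` means `(u, v)` is an edge of the grid oriented in the canonical forward
direction: `v` is immediately to the right of `u` (a horizontal edge) or immediately
below `u` (a vertical edge). -/
def Fwd {m n : ℕ} (u v : Fin m × Fin n) : Prop :=
  (u.1 = v.1 ∧ u.2.val + 1 = v.2.val) ∨ (u.2 = v.2 ∧ u.1.val + 1 = v.1.val)

/-- The type `D` of canonically oriented edges of the `m × n` grid graph. -/
def FwdEdge (m n : ℕ) :=
  {p : (Fin m × Fin n) × (Fin m × Fin n) // Fwd p.1 p.2}

/-- The horizontal oriented edge `(i,j) → (i,j+1)`. -/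
def hEdge {m n : ℕ} (i j : ℕ) (hi : i < m) (hj : j + 1 < n) : FwdEdge m n :=
  ⟨((⟨i, hi⟩, ⟨j, Nat.lt_of_succ_lt hj⟩), (⟨i, hi⟩, ⟨j + 1, hj⟩)), Or.inl ⟨rfl, rfl⟩⟩

/-- The vertical oriented edge `(i,j) → (i+1,j)`. -/
def vEdge {m n : ℕ} (i j : ℕ) (hi : i + 1 < m) (hj : j < n) : FwdEdge m n :=
  ⟨((⟨i, Nat.lt_of_succ_lt hi⟩, ⟨j, hj⟩), (⟨i + 1, hi⟩, ⟨j, hj⟩)), Or.inr ⟨rfl, rfl⟩⟩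

/-- A function `δ : D → ZMod 3` on oriented grid edges is valid if
(i) `δ e ≠ 0` for every edge `e`, and
(ii) around every unit square, `δ(top) + δ(right) = δ(left) + δ(bottom)`. -/
def ValidDelta {m n : ℕ} (δ : FwdEdge m n → ZMod 3) : Prop :=
  (∀ e : FwdEdge m n, δ e ≠ 0) ∧
  ∀ (i j : ℕ) (hi : i + 1 < m) (hj : j + 1 < n),
    δ (hEdge i j (Nat.lt_of_succ_lt hi) hj) + δ (vEdge i (j + 1) hi hj) =
      δ (vEdge i j hi (Nat.lt_of_succ_lt hj)) + δ (hEdge (i + 1) j hi hj)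

lemma gridAdj_iff {m n : ℕ} (u v : Fin m × Fin n) : GridAdj u v ↔ Fwd u v ∨ Fwd v u := by
  simp only [GridAdj, Fwd, Fin.ext_iff, Int.abs_eq_natAbs]
  omega

/-- First-column values of the coloring built from `δ`. -/
def colF {m n : ℕ} [NeZero n] (δ : FwdEdge m n → ZMod 3) : ℕ → ZMod 3
  | 0 => 0
  | i + 1 => colF δ i +
      (if h : i + 1 < m then δ (vEdge i 0 h (Nat.pos_of_ne_zero (NeZero.ne n))) else 0)

/-- The coloring built from `δ` by summing along the first column and then along rows. -/
def cF {m n : ℕ} [NeZero n] (δ : FwdEdge m n → ZMod 3) (i : ℕ) : ℕ → ZMod 3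
  | 0 => colF δ i
  | j + 1 => cF δ i j + (if h : i < m ∧ j + 1 < n then δ (hEdge i j h.1 h.2) else 0)

/-- **Lemma 3 of the paper (Eulerian-orientation bijection), grid-edge form.**
The map sending a coloring `c` to its edge-difference function
`δ_c(e) = c(head e) - c(tail e)` is a bijection from the proper 3-colorings of the
`m × n` grid graph with `c(v₀) = 0` onto the functions `δ` on oriented grid edges
satisfying conditions (i) and (ii). -/
theorem coloring_delta_bijection {m n : ℕ} [NeZero m] [NeZero n] :
    Set.BijOn
      (fun (c : Fin m × Fin n → ZMod 3) (e : FwdEdge m n) => c e.val.2 - c e.val.1)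
      {c : Fin m × Fin n → ZMod 3 | IsProperColoring c ∧ c (0, 0) = 0}
      {δ : FwdEdge m n → ZMod 3 | ValidDelta δ} := by
  have hm := Nat.pos_of_ne_zero (NeZero.ne m)
  have hn := Nat.pos_of_ne_zero (NeZero.ne n)
  refine ⟨?_, ?_, ?_⟩
  · -- MapsTo
    rintro c ⟨hc, -⟩
    refine ⟨fun e h => ?_, fun i j hi hj => ?_⟩
    · exact hc e.val.1 e.val.2 ((gridAdj_iff _ _).mpr (Or.inl e.prop)) (sub_eq_zero.mp h).symm
    · simp only [hEdge, vEdge]; ring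
  · -- InjOn
    rintro c ⟨-, hc0⟩ c' ⟨-, hc0'⟩ h
    have hc : ∀ e : FwdEdge m n, c e.val.2 - c e.val.1 = c' e.val.2 - c' e.val.1 :=
      fun e => congrFun h e
    have col : ∀ i (hi : i < m), c (⟨i, hi⟩, ⟨0, hn⟩) = c' (⟨i, hi⟩, ⟨0, hn⟩) := by
      intro i
      induction i with
      | zero =>
        intro _
        have h00 : ((⟨0, hm⟩ : Fin m), (⟨0, hn⟩ : Fin n)) = ((0, 0) : Fin m × Fin n) := by
          ext <;> simp
        rw [h00, hc0, hc0']
      | succ i ih =>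
        intro hi
        have := hc (vEdge i 0 hi hn)
        simp only [vEdge] at this
        rwa [ih (Nat.lt_of_succ_lt hi), sub_left_inj] at this
    have key : ∀ (i : ℕ) (hi : i < m) (j : ℕ) (hj : j < n),
        c (⟨i, hi⟩, ⟨j, hj⟩) = c' (⟨i, hi⟩, ⟨j, hj⟩) := by
      intro i hi j
      induction j with
      | zero => intro _; exact col i hi
      | succ j ih =>
        intro hj
        have := hc (hEdge i j hi hj)
        simp only [hEdge] at this
        rwa [ih (Nat.lt_of_succ_lt hj), sub_left_inj] at this
    funext p
    exact key p.1.val p.1.isLt p.2.val p.2.isLt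
  · -- SurjOn
    rintro δ ⟨h1, h2⟩
    set c : Fin m × Fin n → ZMod 3 := fun p => cF δ p.1.val p.2.val with hcdef
    have factA : ∀ (i j : ℕ) (hi : i < m) (hj : j + 1 < n),
        cF δ i (j + 1) - cF δ i j = δ (hEdge i j hi hj) := by
      intro i j hi hj
      show cF δ i j + _ - cF δ i j = _
      rw [dif_pos ⟨hi, hj⟩, add_sub_cancel_left]
    have factB : ∀ (j i : ℕ) (hi : i + 1 < m) (hj : j < n),
        cF δ (i + 1) j - cF δ i j = δ (vEdge i j hi hj) := by
      intro j
      induction j with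
      | zero =>
        intro i hi hj
        show colF δ (i + 1) - colF δ i = _
        rw [colF, dif_pos hi, add_sub_cancel_left]
      | succ j ih =>
        intro i hi hj
        have e1 : cF δ (i + 1) (j + 1)
            = cF δ (i + 1) j + δ (hEdge (i + 1) j hi hj) := by
          show cF δ (i + 1) j + _ = _
          rw [dif_pos ⟨hi, hj⟩]
        have e2 : cF δ i (j + 1)
            = cF δ i j + δ (hEdge i j (Nat.lt_of_succ_lt hi) hj) := by
          show cF δ i j + _ = _
          rw [dif_pos ⟨Nat.lt_of_succ_lt hi, hj⟩]
        have ihv := ih i hi (Nat.lt_of_succ_lt hj)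
        have h22 := h2 i j hi hj
        rw [e1, e2]
        linear_combination ihv - h22
    have hδc : ∀ e : FwdEdge m n, c e.val.2 - c e.val.1 = δ e := by
      rintro ⟨⟨⟨u1, u2⟩, ⟨v1, v2⟩⟩, hf | hf⟩
      · obtain ⟨hf1, hf2⟩ := hf
        dsimp at hf1 hf2
        have hv2 : u2.val + 1 < n := hf2 ▸ v2.isLt
        have heq : (⟨((u1, u2), (v1, v2)), Or.inl ⟨hf1, hf2⟩⟩ : FwdEdge m n)
            = hEdge u1.val u2.val u1.isLt hv2 := by
          apply Subtype.ext
          have hf1v := congrArg Fin.val hf1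
          simp only [hEdge, Prod.ext_iff, Fin.ext_iff]
          exact ⟨trivial, hf1v.symm, hf2.symm⟩
        rw [heq]
        show cF δ u1.val (u2.val + 1) - cF δ u1.val u2.val = _
        exact factA u1.val u2.val u1.isLt hv2
      · obtain ⟨hf1, hf2⟩ := hf
        dsimp at hf1 hf2
        have hv1 : u1.val + 1 < m := hf2 ▸ v1.isLt
        have heq : (⟨((u1, u2), (v1, v2)), Or.inr ⟨hf1, hf2⟩⟩ : FwdEdge m n)
            = vEdge u1.val u2.val hv1 u2.isLt := by
          apply Subtype.ext
          have hf1v := congrArg Fin.val hf1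
          simp only [vEdge, Prod.ext_iff, Fin.ext_iff]
          exact ⟨trivial, hf2.symm, hf1v.symm⟩
        rw [heq]
        show cF δ (u1.val + 1) u2.val - cF δ u1.val u2.val = _
        exact factB u2.val u1.val hv1 u2.isLt
    refine ⟨c, ⟨?_, ?_⟩, funext hδc⟩
    · intro u v hadj
      rcases (gridAdj_iff u v).mp hadj with hf | hf
      · intro hcc
        exact h1 ⟨(u, v), hf⟩ (by rw [← hδc ⟨(u, v), hf⟩]; simp [hcc])
      · intro hcc
        exact h1 ⟨(v, u), hf⟩ (by rw [← hδc ⟨(v, u), hf⟩]; simp [hcc])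
    · show cF δ (0 : Fin m).val (0 : Fin n).val = 0
      simp [cF, colF]
end
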